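/- Let F : ℝⁿ → ℝᵐ be continuously differentiable with Jacobian J(x), let L be a real p×n matrix, and let γ > 0 satisfy the completeness condition ‖J(x)v‖² + ‖Lv‖² ≥ γ‖v‖² for all v ∈ ℝⁿ and all x ∈ ℝⁿ. Let {x_k} ⊂ ℝⁿ be a sequence with F(x_k) ≠ 0 and ‖F(x_{k+1})‖ ≤ ‖F(x_k)‖ for all k, and let d_k solve (J(x_k)ᵀJ(x_k) + λ_k LᵀL)d_k = −J(x_k)ᵀF(x_k) with λ_k = ‖F(x_k)‖². Then {d_k} is gradient-related to {x_k} for φ(x) = ½‖F(x)‖²: for every subsequence {x_k}_{k∈K} converging to a point x∞ with ∇φ(x∞) ≠ 0, the subsequence {d_k}_{k∈K} is bounded and limsup_{k→∞, k∈K} ∇φ(x_k)ᵀd_k < 0. -/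

import Mathlib

/-!
Eliminating the system matrix from the LMMSS equation gives
`⟪∇φ(x_k), d_k⟫ = -(‖J_k d_k‖² + λ_k ‖L d_k‖²)`. Since the residuals are non-increasing,
`λ_k ≥ ‖F(x∞)‖² > 0` for all `k`, so with `c = min 1 ‖F(x∞)‖²` the completeness condition
yields the uniform descent estimate `⟪∇φ(x_k), d_k⟫ ≤ -c γ ‖d_k‖²`. Along the subsequence the
gradients converge to `∇φ(x∞) ≠ 0` and the system matrices converge, hence stay bounded; the
descent estimate then bounds `‖d_k‖` above by a multiple of `‖∇φ(x_k)‖`, and the equation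
bounds it below by a multiple of `‖∇φ(x_k)‖`, which keeps `⟪∇φ(x_k), d_k⟫` away from zero.
-/

open Matrix Filter RealInnerProductSpace

/-- The continuous linear map on Euclidean spaces induced by a real matrix. -/
noncomputable def matCLM {m n : ℕ} (A : Matrix (Fin m) (Fin n) ℝ) :
    EuclideanSpace ℝ (Fin n) →L[ℝ] EuclideanSpace ℝ (Fin m) :=
  LinearMap.toContinuousLinearMap (Matrix.toEuclideanLin A)

open Topology

lemma exists_pos_eventually_le_norm {E F : Type*} [NormedAddCommGroup E]
    [SeminormedAddCommGroup F] {g : ℕ → E} {d : ℕ → F} {l : E} {M : ℝ}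
    (hgd : ∀ k, ‖g k‖ ≤ M * ‖d k‖) (hg : Tendsto g atTop (𝓝 l)) (hg0 : l ≠ 0) :
    ∃ δ > 0, ∀ᶠ k in atTop, δ ≤ ‖d k‖ := by
  have hε : 0 < ‖l‖ / 2 := half_pos (norm_pos_iff.mpr hg0)
  have hev : ∀ᶠ k in atTop, ‖l‖ / 2 ≤ M * ‖d k‖ := by
    filter_upwards [hg.norm.eventually (eventually_gt_nhds (half_lt_self (norm_pos_iff.mpr hg0)))]
      with k hk using hk.le.trans (hgd k)
  obtain ⟨k₀, hk₀⟩ := hev.exists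
  have hM : 0 < M := pos_of_mul_pos_left (hε.trans_le hk₀) (norm_nonneg _)
  refine ⟨‖l‖ / 2 / M, div_pos hε hM, ?_⟩
  filter_upwards [hev] with k hk
  rwa [div_le_iff₀' hM]

section DescentDirections

variable {E : Type*} [NormedAddCommGroup E] [InnerProductSpace ℝ E]

lemma norm_le_div_of_inner_le_neg_mul_sq {g d : E} {μ : ℝ} (hμ : 0 < μ)
    (h : ⟪g, d⟫ ≤ -(μ * ‖d‖ ^ 2)) : ‖d‖ ≤ ‖g‖ / μ := by
  rw [le_div_iff₀ hμ]
  have hcs : -⟪g, d⟫ ≤ ‖g‖ * ‖d‖ := (neg_le_abs _).trans (abs_real_inner_le_norm g d)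
  rcases (norm_nonneg d).eq_or_lt with hd0 | hdpos
  · rw [← hd0, zero_mul]
    exact norm_nonneg g
  · nlinarith

lemma exists_bound_of_inner_le_neg_mul_sq {g d : ℕ → E} {l : E} {μ : ℝ} (hμ : 0 < μ)
    (hdesc : ∀ k, ⟪g k, d k⟫ ≤ -(μ * ‖d k‖ ^ 2)) (hg : Tendsto g atTop (𝓝 l)) :
    ∃ C, ∀ k, ‖d k‖ ≤ C := by
  obtain ⟨B, hB⟩ := hg.norm.bddAbove_range
  exact ⟨B / μ, fun k => (norm_le_div_of_inner_le_neg_mul_sq hμ (hdesc k)).trans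
    (div_le_div_of_nonneg_right (hB ⟨k, rfl⟩) hμ.le)⟩

lemma limsup_inner_neg_of_inner_le_neg_mul_sq {g d : ℕ → E} {l : E} {μ M : ℝ} (hμ : 0 < μ)
    (hdesc : ∀ k, ⟪g k, d k⟫ ≤ -(μ * ‖d k‖ ^ 2)) (hgd : ∀ k, ‖g k‖ ≤ M * ‖d k‖)
    (hg : Tendsto g atTop (𝓝 l)) (hg0 : l ≠ 0) :
    limsup (fun k => ⟪g k, d k⟫) atTop < 0 := by
  obtain ⟨δ, hδ, hδd⟩ := exists_pos_eventually_le_norm hgd hg hg0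
  have hev : ∀ᶠ k in atTop, ⟪g k, d k⟫ ≤ -(μ * δ ^ 2) := by
    filter_upwards [hδd] with k hk
    have := pow_le_pow_left₀ hδ.le hk 2
    nlinarith [hdesc k]
  obtain ⟨B, hB⟩ := hg.norm.bddAbove_range
  obtain ⟨C, hC⟩ := exists_bound_of_inner_le_neg_mul_sq hμ hdesc hg
  have hlower : ∀ k, -(B * C) ≤ ⟪g k, d k⟫ := fun k =>
    (neg_le_neg (mul_le_mul (hB ⟨k, rfl⟩) (hC k) (norm_nonneg _)
      ((norm_nonneg _).trans (hB ⟨k, rfl⟩)))).trans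
      (neg_le_of_abs_le (abs_real_inner_le_norm _ _))
  calc limsup (fun k => ⟪g k, d k⟫) atTop
      ≤ -(μ * δ ^ 2) := limsup_le_of_le (isCoboundedUnder_le_of_le atTop hlower) hev
    _ < 0 := neg_neg_of_pos (by positivity)

end DescentDirections

lemma Antitone.le_of_tendsto_comp_strictMono {α : Type*} [TopologicalSpace α] [Preorder α]
    [OrderClosedTopology α] {u : ℕ → α} {K : ℕ → ℕ} {a : α} (hu : Antitone u)
    (hK : StrictMono K) (h : Tendsto (u ∘ K) atTop (𝓝 a)) (j : ℕ) : a ≤ u j :=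
  ((hu.comp_monotone hK.monotone).le_of_tendsto h j).trans (hu hK.le_apply)

section matCLM

variable {m n p : ℕ}

lemma matCLM_add (A B : Matrix (Fin m) (Fin n) ℝ) : matCLM (A + B) = matCLM A + matCLM B := by
  unfold matCLM; rw [map_add]; rfl

lemma matCLM_smul (c : ℝ) (A : Matrix (Fin m) (Fin n) ℝ) : matCLM (c • A) = c • matCLM A := by
  unfold matCLM; rw [_root_.map_smul]; rfl

lemma matCLM_mul (A : Matrix (Fin m) (Fin n) ℝ) (B : Matrix (Fin n) (Fin p) ℝ) :
    matCLM (A * B) = (matCLM A).comp (matCLM B) := by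
  ext v i
  simp [matCLM, Matrix.mulVec_mulVec]

lemma inner_matCLM_transpose (A : Matrix (Fin m) (Fin n) ℝ) (u : EuclideanSpace ℝ (Fin m))
    (v : EuclideanSpace ℝ (Fin n)) : ⟪matCLM Aᵀ u, v⟫ = ⟪u, matCLM A v⟫ := by
  rw [← Matrix.conjTranspose_eq_transpose_of_trivial]
  show ⟪(Matrix.toEuclideanLin Aᴴ) u, v⟫ = ⟪u, (Matrix.toEuclideanLin A) v⟫
  rw [Matrix.toEuclideanLin_conjTranspose_eq_adjoint]
  exact LinearMap.adjoint_inner_left _ _ _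

lemma continuous_matCLM : Continuous (matCLM : Matrix (Fin m) (Fin n) ℝ → _) :=
  LinearMap.continuous_of_finiteDimensional
    { toFun := matCLM, map_add' := matCLM_add, map_smul' := matCLM_smul }

variable {J : Matrix (Fin m) (Fin n) ℝ} {L : Matrix (Fin p) (Fin n) ℝ} {t : ℝ}
  {r : EuclideanSpace ℝ (Fin m)} {d : EuclideanSpace ℝ (Fin n)}

lemma inner_eq_of_lmmss_system (hd : matCLM (Jᵀ * J + t • (Lᵀ * L)) d = -(matCLM Jᵀ r)) :
    ⟪matCLM Jᵀ r, d⟫ = -(‖matCLM J d‖ ^ 2 + t * ‖matCLM L d‖ ^ 2) := by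
  have h := congrArg (fun v => ⟪v, d⟫) hd
  simp only [matCLM_add, matCLM_mul, matCLM_smul, _root_.add_apply,
    ContinuousLinearMap.coe_comp, Function.comp_apply, FunLike.coe_smul,
    Pi.smul_apply, inner_add_left, real_inner_smul_left, inner_neg_left] at h
  rw [inner_matCLM_transpose, inner_matCLM_transpose, real_inner_self_eq_norm_sq,
    real_inner_self_eq_norm_sq] at h
  linarith

lemma inner_le_neg_mul_sq_of_lmmss_system {γ c : ℝ} (hc0 : 0 ≤ c) (hc1 : c ≤ 1) (hct : c ≤ t)
    (hcomp : ‖matCLM J d‖ ^ 2 + ‖matCLM L d‖ ^ 2 ≥ γ * ‖d‖ ^ 2)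
    (hd : matCLM (Jᵀ * J + t • (Lᵀ * L)) d = -(matCLM Jᵀ r)) :
    ⟪matCLM Jᵀ r, d⟫ ≤ -(c * γ * ‖d‖ ^ 2) := by
  rw [inner_eq_of_lmmss_system hd]
  nlinarith [mul_le_mul_of_nonneg_left hcomp hc0, sq_nonneg ‖matCLM J d‖,
    sq_nonneg ‖matCLM L d‖]

end matCLM

theorem lmmss_directions_gradient_related_general
    (n m p : ℕ)
    (F : EuclideanSpace ℝ (Fin n) → EuclideanSpace ℝ (Fin m))
    (J : EuclideanSpace ℝ (Fin n) → Matrix (Fin m) (Fin n) ℝ)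
    (hdiff : ∀ x, HasFDerivAt F (matCLM (J x)) x)
    (hJcont : Continuous J)
    (L : Matrix (Fin p) (Fin n) ℝ) (γ : ℝ) (hγ : 0 < γ)
    (hcomp : ∀ (x : EuclideanSpace ℝ (Fin n)) (v : EuclideanSpace ℝ (Fin n)),
      ‖matCLM (J x) v‖ ^ 2 + ‖matCLM L v‖ ^ 2 ≥ γ * ‖v‖ ^ 2)
    (x d : ℕ → EuclideanSpace ℝ (Fin n))
    (hmono : ∀ k, ‖F (x (k + 1))‖ ≤ ‖F (x k)‖)
    (hd : ∀ k,
      matCLM ((J (x k))ᵀ * J (x k) + ‖F (x k)‖ ^ 2 • (Lᵀ * L)) (d k) =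
        -(matCLM (J (x k))ᵀ (F (x k)))) :
    ∀ K : ℕ → ℕ, StrictMono K →
      ∀ xinf : EuclideanSpace ℝ (Fin n),
        Tendsto (fun k => x (K k)) atTop (nhds xinf) →
        matCLM (J xinf)ᵀ (F xinf) ≠ 0 →
        (∃ C : ℝ, ∀ k, ‖d (K k)‖ ≤ C) ∧
          limsup (fun k => ⟪matCLM (J (x (K k)))ᵀ (F (x (K k))), d (K k)⟫) atTop < 0 := by
  intro K hK xinf hx hg0
  have hF : Continuous F := continuous_iff_continuousAt.2 fun y => (hdiff y).continuousAt
  have hFinf : F xinf ≠ 0 := fun h => hg0 (by rw [h, map_zero])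
  have hres : ∀ j, ‖F xinf‖ ^ 2 ≤ ‖F (x j)‖ ^ 2 :=
    (antitone_nat_of_succ_le fun k => pow_le_pow_left₀ (norm_nonneg _) (hmono k) 2)
      |>.le_of_tendsto_comp_strictMono hK (((hF.tendsto xinf).comp hx).norm.pow 2)
  set c := min 1 (‖F xinf‖ ^ 2)
  have hμ : 0 < c * γ := mul_pos (lt_min one_pos (pow_pos (norm_pos_iff.2 hFinf) 2)) hγ
  have hdesc : ∀ k, ⟪matCLM (J (x (K k)))ᵀ (F (x (K k))), d (K k)⟫ ≤
      -(c * γ * ‖d (K k)‖ ^ 2) :=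
    fun k => inner_le_neg_mul_sq_of_lmmss_system (le_min zero_le_one (sq_nonneg _))
      (min_le_left _ _) ((min_le_right _ _).trans (hres _)) (hcomp _ _) (hd _)
  have hg : Tendsto (fun k => matCLM (J (x (K k)))ᵀ (F (x (K k)))) atTop
      (𝓝 (matCLM (J xinf)ᵀ (F xinf))) :=
    (((continuous_matCLM.comp hJcont.matrix_transpose).clm_apply hF).tendsto xinf).comp hx
  have hA : Tendsto (fun k => matCLM ((J (x (K k)))ᵀ * J (x (K k)) +
      ‖F (x (K k))‖ ^ 2 • (Lᵀ * L))) atTop (𝓝 _) :=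
    ((continuous_matCLM.comp ((hJcont.matrix_transpose.matrix_mul hJcont).add
      ((hF.norm.pow 2).smul continuous_const))).tendsto xinf).comp hx
  obtain ⟨M, hM⟩ := hA.norm.bddAbove_range
  have hgd : ∀ k, ‖matCLM (J (x (K k)))ᵀ (F (x (K k)))‖ ≤ M * ‖d (K k)‖ := fun k => by
    rw [← norm_neg, ← hd]
    exact (ContinuousLinearMap.le_opNorm _ _).trans
      (mul_le_mul_of_nonneg_right (hM ⟨k, rfl⟩) (norm_nonneg _))
  exact ⟨exists_bound_of_inner_le_neg_mul_sq hμ hdesc hg,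
    limsup_inner_neg_of_inner_le_neg_mul_sq hμ hdesc hgd hg hg0⟩

/-- under the completeness condition, for a sequence `{x_k}` with `F(x_k) ≠ 0`
and non-increasing residual norms, the LMMSS directions `{d_k}` (with `λ_k = ‖F(x_k)‖²`)
are gradient-related to `{x_k}` for `φ(x) = ½‖F(x)‖²` (whose gradient is `J(x)ᵀF(x)`):
along every subsequence converging to a non-stationary point, the directions are bounded
and the limsup of `∇φ(x_k)ᵀd_k` is strictly negative. -/
theorem lmmss_directions_gradient_related
    (n m p : ℕ)
    (F : EuclideanSpace ℝ (Fin n) → EuclideanSpace ℝ (Fin m))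
    (J : EuclideanSpace ℝ (Fin n) → Matrix (Fin m) (Fin n) ℝ)
    (hdiff : ∀ x, HasFDerivAt F (matCLM (J x)) x)
    (hJcont : Continuous J)
    (L : Matrix (Fin p) (Fin n) ℝ) (γ : ℝ) (hγ : 0 < γ)
    (hcomp : ∀ (x : EuclideanSpace ℝ (Fin n)) (v : EuclideanSpace ℝ (Fin n)),
      ‖matCLM (J x) v‖ ^ 2 + ‖matCLM L v‖ ^ 2 ≥ γ * ‖v‖ ^ 2)
    (x d : ℕ → EuclideanSpace ℝ (Fin n))
    (hFk : ∀ k, F (x k) ≠ 0)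
    (hmono : ∀ k, ‖F (x (k + 1))‖ ≤ ‖F (x k)‖)
    (hd : ∀ k,
      matCLM ((J (x k))ᵀ * J (x k) + ‖F (x k)‖ ^ 2 • (Lᵀ * L)) (d k) =
        -(matCLM (J (x k))ᵀ (F (x k)))) :
    ∀ K : ℕ → ℕ, StrictMono K →
      ∀ xinf : EuclideanSpace ℝ (Fin n),
        Tendsto (fun k => x (K k)) atTop (nhds xinf) →
        matCLM (J xinf)ᵀ (F xinf) ≠ 0 →
        (∃ C : ℝ, ∀ k, ‖d (K k)‖ ≤ C) ∧
          limsup (fun k => ⟪matCLM (J (x (K k)))ᵀ (F (x (K k))), d (K k)⟫) atTop < 0 :=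
  lmmss_directions_gradient_related_general n m p F J hdiff hJcont L γ hγ hcomp x d hmono hd
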